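/- For any r > 0, let y₀ ∈ Y be the unique solution of a_r(y₀,ȳ) = l(ȳ) for all ȳ ∈ Y, and define J_r⋆⋆(λ) := ½∫∫_{Q_T}(T_r λ)λ dxdt − b(y₀,λ). Then sup over λ ∈ L²(Q_T) of inf over y ∈ Y of 𝓛_r(y,λ) equals −inf over λ ∈ L²(Q_T) of J_r⋆⋆(λ) plus 𝓛_r(y₀,0), where 𝓛_r(y,λ) := ½a_r(y,y) + b(y,λ) − l(y). -/

import Mathlib

open scoped RealInnerProductSpace

/-!
The statement encodes `ρ₀⁻¹ y|_{q_T}` as `obs y`, `ρ⁻¹ L y` as `lop y` and `ρ₀⁻¹ y_obs` as `g`, so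
that `a(y, ȳ) = ⟪obs y, obs ȳ⟫`, `b(y, λ) = ⟪lop y, λ⟫` and `l(y) = ⟪obs y, g⟫`; below, `a_r` is
`augmentedForm` and `𝓛_r` is `augmentedLagrangian`.

For fixed `λ`, the augmented Lagrangian `y ↦ 𝓛_r(y, λ)` is the quadratic `½ a_r(y, y) - a_r(w, y)`
with `w = y₀ - z_λ`, where `z_λ` is the state defining `T_r λ`; completing the square, its
infimum is `-½ a_r(w, w)`, attained at `y = w`. Expanding `a_r(y₀ - z_λ, y₀ - z_λ)` with
`a_r(z_λ, ·) = b(·, λ)` turns this into `𝓛_r(y₀, 0) - J_r⋆⋆(λ)`, which also shows that `J_r⋆⋆` is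
bounded below by `𝓛_r(y₀, 0)`; so the supremum over `λ` is `-inf J_r⋆⋆ + 𝓛_r(y₀, 0)`.
-/

theorem Real.iSup_neg_eq_neg_iInf {ι : Type*} (f : ι → ℝ) : ⨆ i, -f i = -⨅ i, f i := by
  rw [iInf, ← Real.sSup_neg, ← Set.image_neg_eq_neg, ← Set.range_comp]
  rfl

theorem Real.ciSup_neg_add_eq {ι : Type*} [Nonempty ι] {f : ι → ℝ} (hf : BddBelow (Set.range f))
    (c : ℝ) : ⨆ i, (-f i + c) = -(⨅ i, f i) + c := by
  have hneg : BddAbove (Set.range fun i => -f i) := by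
    obtain ⟨m, hm⟩ := hf
    exact ⟨-m, by rintro _ ⟨i, rfl⟩; exact neg_le_neg (hm ⟨i, rfl⟩)⟩
  rw [← ciSup_add hneg, Real.iSup_neg_eq_neg_iInf]

namespace LinearMap.BilinForm

variable {E : Type*} [AddCommGroup E] [Module ℝ E] {B : LinearMap.BilinForm ℝ E}

theorem IsSymm.apply_sub_sub (hB : B.IsSymm) (x y : E) :
    B (x - y) (x - y) = B x x - 2 * B x y + B y y := by
  simp only [map_sub, LinearMap.sub_apply, hB.eq y x]
  ring

theorem IsSymm.isLeast_half_apply_self_sub (hB : B.IsSymm) (hpos : ∀ x, 0 ≤ B x x) (w : E) :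
    IsLeast (Set.range fun y => 1 / 2 * B y y - B w y) (-(1 / 2) * B w w) := by
  have square : ∀ y, 1 / 2 * B y y - B w y = 1 / 2 * B (y - w) (y - w) - 1 / 2 * B w w := by
    intro y
    rw [hB.apply_sub_sub, hB.eq y w]
    ring
  refine ⟨⟨w, by simp only; ring⟩, ?_⟩
  rintro _ ⟨y, rfl⟩
  have := hpos (y - w)
  simp only [square]
  linarith

theorem IsSymm.ciInf_half_apply_self_sub (hB : B.IsSymm) (hpos : ∀ x, 0 ≤ B x x) (w : E) :
    ⨅ y, (1 / 2 * B y y - B w y) = -(1 / 2) * B w w :=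
  (hB.isLeast_half_apply_self_sub hpos w).isGLB.ciInf_eq

end LinearMap.BilinForm

section AugmentedLagrangian

variable {Y HQ Hq : Type*} [AddCommGroup Y] [Module ℝ Y] [TopologicalSpace Y]
  [NormedAddCommGroup HQ] [InnerProductSpace ℝ HQ] [NormedAddCommGroup Hq] [InnerProductSpace ℝ Hq]
  (obs : Y →L[ℝ] Hq) (lop : Y →L[ℝ] HQ) (r : ℝ)

noncomputable def augmentedForm : LinearMap.BilinForm ℝ Y :=
  (innerₗ Hq).compl₁₂ (obs : Y →ₗ[ℝ] Hq) obs + r • (innerₗ HQ).compl₁₂ (lop : Y →ₗ[ℝ] HQ) lop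

@[simp]
theorem augmentedForm_apply (u v : Y) :
    augmentedForm obs lop r u v = ⟪obs u, obs v⟫ + r * ⟪lop u, lop v⟫ :=
  rfl

theorem augmentedForm_isSymm : (augmentedForm obs lop r).IsSymm :=
  ⟨fun u v => by simp only [augmentedForm_apply, real_inner_comm]⟩

variable {r}

theorem augmentedForm_self_nonneg (hr : 0 ≤ r) (u : Y) : 0 ≤ augmentedForm obs lop r u u :=
  add_nonneg real_inner_self_nonneg (mul_nonneg hr real_inner_self_nonneg)

variable (r)

noncomputable def augmentedLagrangian (g : Hq) (y : Y) (lam : HQ) : ℝ :=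
  1 / 2 * augmentedForm obs lop r y y + ⟪lop y, lam⟫ - ⟪obs y, g⟫

variable {obs lop r} {g : Hq} {y₀ z : Y} {lam : HQ}

theorem augmentedLagrangian_eq (hy₀ : ∀ yb, augmentedForm obs lop r y₀ yb = ⟪obs yb, g⟫)
    (hz : ∀ yb, augmentedForm obs lop r z yb = ⟪lop yb, lam⟫) (y : Y) :
    augmentedLagrangian obs lop r g y lam =
      1 / 2 * augmentedForm obs lop r y y - augmentedForm obs lop r (y₀ - z) y := by
  rw [augmentedLagrangian, map_sub, LinearMap.sub_apply, hy₀, hz]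
  ring

theorem ciInf_augmentedLagrangian (hr : 0 ≤ r)
    (hy₀ : ∀ yb, augmentedForm obs lop r y₀ yb = ⟪obs yb, g⟫)
    (hz : ∀ yb, augmentedForm obs lop r z yb = ⟪lop yb, lam⟫) :
    ⨅ y, augmentedLagrangian obs lop r g y lam =
      -(1 / 2) * augmentedForm obs lop r (y₀ - z) (y₀ - z) := by
  simp_rw [augmentedLagrangian_eq hy₀ hz]
  exact (augmentedForm_isSymm obs lop r).ciInf_half_apply_self_sub
    (augmentedForm_self_nonneg obs lop hr) _

theorem half_inner_sub_inner_eq (hz : ∀ yb, augmentedForm obs lop r z yb = ⟪lop yb, lam⟫)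
    (y₀ : Y) :
    1 / 2 * ⟪lop z, lam⟫ - ⟪lop y₀, lam⟫ =
      1 / 2 * augmentedForm obs lop r (y₀ - z) (y₀ - z) -
        1 / 2 * augmentedForm obs lop r y₀ y₀ := by
  rw [(augmentedForm_isSymm obs lop r).apply_sub_sub, ← hz z, ← hz y₀,
    (augmentedForm_isSymm obs lop r).eq z y₀]
  ring

end AugmentedLagrangian

theorem dual_formulation_eq
    {Y HQ Hq : Type*}
    [NormedAddCommGroup Y] [InnerProductSpace ℝ Y]
    [NormedAddCommGroup HQ] [InnerProductSpace ℝ HQ]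
    [NormedAddCommGroup Hq] [InnerProductSpace ℝ Hq]
    (obs : Y →L[ℝ] Hq) (lop : Y →L[ℝ] HQ)
    (g : Hq) (r : ℝ) (hr : 0 < r)
    (T : HQ → HQ)
    (hT : ∀ lam : HQ, ∃ y : Y,
      (∀ yb : Y, ⟪obs y, obs yb⟫ + r * ⟪lop y, lop yb⟫ = ⟪lop yb, lam⟫) ∧
      T lam = lop y)
    (y₀ : Y)
    (hy₀ : ∀ yb : Y, ⟪obs y₀, obs yb⟫ + r * ⟪lop y₀, lop yb⟫ = ⟪obs yb, g⟫) :
    (⨆ lam : HQ, ⨅ y : Y,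
        ((1 / 2) * (⟪obs y, obs y⟫ + r * ⟪lop y, lop y⟫) +
          ⟪lop y, lam⟫ - ⟪obs y, g⟫)) =
      -(⨅ lam : HQ, ((1 / 2) * ⟪T lam, lam⟫ - ⟪lop y₀, lam⟫)) +
        ((1 / 2) * (⟪obs y₀, obs y₀⟫ + r * ⟪lop y₀, lop y₀⟫) -
          ⟪obs y₀, g⟫) := by
  set A := augmentedForm obs lop r
  set C := (1 / 2) * (⟪obs y₀, obs y₀⟫ + r * ⟪lop y₀, lop y₀⟫) - ⟪obs y₀, g⟫
  set J := fun lam => (1 / 2) * ⟪T lam, lam⟫ - ⟪lop y₀, lam⟫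
  have hC : C = -(1 / 2) * A y₀ y₀ := by
    have := hy₀ y₀
    simp only [C, A, augmentedForm_apply]
    linarith
  have inner_inf : ∀ lam, ⨅ y, augmentedLagrangian obs lop r g y lam = -J lam + C ∧ C ≤ J lam := by
    intro lam
    obtain ⟨z, hz, hTz⟩ := hT lam
    have hJ : J lam = 1 / 2 * A (y₀ - z) (y₀ - z) - 1 / 2 * A y₀ y₀ := by
      simp only [J, hTz]
      exact half_inner_sub_inner_eq hz y₀
    have hpos := augmentedForm_self_nonneg obs lop hr.le (y₀ - z)
    refine ⟨?_, by linarith⟩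
    rw [ciInf_augmentedLagrangian hr.le hy₀ hz, hJ, hC]
    ring
  calc (⨆ lam, ⨅ y, augmentedLagrangian obs lop r g y lam)
      = ⨆ lam, (-J lam + C) := iSup_congr fun lam => (inner_inf lam).1
    _ = -(⨅ lam, J lam) + C :=
      Real.ciSup_neg_add_eq ⟨C, by rintro _ ⟨lam, rfl⟩; exact (inner_inf lam).2⟩ C
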